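/- arXiv:1509.07462 — 6 statements merged into one kernel-verified Lean document; each statement's English description precedes it below -/
import Mathlib

section
/- Let H be a cancellative monoid (a cancellative semigroup with identity). If H satisfies the ascending chain condition on principal left ideals aH and the ascending chain condition on principal right ideals Ha, then H is atomic, i.e., every element of H that is not a unit can be written as a finite product of atoms of H. -/
open scoped Classical ENNReal

/-- The set of lengths of `a`: all `k` such that `a` is a product of `k` irreducibles,
with the convention `L(a) = {0}` for units. -/
noncomputable def lengths {M : Type*} [Monoid M] (a : M) : Set ℕ :=
  if IsUnit a then {0}
  else {k | ∃ l : List M, l.length = k ∧ (∀ x ∈ l, Irreducible x) ∧ l.prod = a}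

/-- A monoid is atomic if every nonunit is a finite product of irreducibles (atoms). -/
def Atomic (M : Type*) [Monoid M] : Prop :=
  ∀ a : M, ¬IsUnit a → ∃ l : List M, (∀ x ∈ l, Irreducible x) ∧ l.prod = a

/-- The set of distances of a set `L ⊆ ℕ`. -/
def distances (L : Set ℕ) : Set ℕ :=
  {d | 0 < d ∧ ∃ k ∈ L, k + d ∈ L ∧ ∀ m ∈ L, k ≤ m → m ≤ k + d → m = k ∨ m = k + d}

/-- The set of distances `Δ(H)` of a monoid. -/
def DeltaH (M : Type*) [Monoid M] : Set ℕ :=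
  ⋃ a : M, distances (lengths a)

/-- The union `U_k(H)` of all sets of lengths containing `k`. -/
def lengthUnion (M : Type*) [Monoid M] (k : ℕ) : Set ℕ :=
  {ℓ | ∃ l1 l2 : List M, l1.length = k ∧ l2.length = ℓ ∧
      (∀ x ∈ l1, Irreducible x) ∧ (∀ x ∈ l2, Irreducible x) ∧ l1.prod = l2.prod}

/-- The `k`-th elasticity `ρ_k(H) = sup U_k(H)`, valued in `ℝ≥0∞`. -/
noncomputable def rhoK (M : Type*) [Monoid M] (k : ℕ) : ℝ≥0∞ :=
  ⨆ ℓ ∈ lengthUnion M k, (ℓ : ℝ≥0∞)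

/-- `λ_k(H) = min U_k(H)`. -/
noncomputable def lamK (M : Type*) [Monoid M] (k : ℕ) : ℕ :=
  sInf (lengthUnion M k)

/-- The elasticity `ρ(L) = sup L / min L` of a set of lengths, with `ρ({0}) = 1`. -/
noncomputable def setElasticity (L : Set ℕ) : ℝ≥0∞ :=
  if L = {0} then 1 else (⨆ n ∈ L, (n : ℝ≥0∞)) / ((sInf L : ℕ) : ℝ≥0∞)

/-- The elasticity `ρ(H) = sup { ρ(L(a)) : a ∈ H }`. -/
noncomputable def elasticity (M : Type*) [Monoid M] : ℝ≥0∞ :=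
  ⨆ a : M, setElasticity (lengths a)

/-- The principal left ideal `Ha`. -/
def leftIdeal {M : Type*} [Monoid M] (a : M) : Set M := Set.range (· * a)

/-- The principal right ideal `aH`. -/
def rightIdeal {M : Type*} [Monoid M] (a : M) : Set M := Set.range (a * ·)

/-- `A` is a generating set of the monoid `M`. -/
def Generates {M : Type*} [Monoid M] (A : Set M) : Prop :=
  ∀ a : M, ∃ l : List M, (∀ x ∈ l, x ∈ A) ∧ l.prod = a

private lemma unit_of_mul_eq_one' {M : Type*} [CancelMonoid M] {e x : M}
    (h : e * x = 1) : IsUnit e := by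
  have h2 : x * e = 1 := by
    have : (x * e) * x = 1 * x := by rw [mul_assoc, h, mul_one, one_mul]
    exact mul_right_cancel this
  exact ⟨⟨e, x, h, h2⟩, rfl⟩

private lemma leftIdeal_ssubset' {M : Type*} [CancelMonoid M] {a b c : M}
    (h : a = c * b) (hc : ¬IsUnit c) : leftIdeal a ⊂ leftIdeal b := by
  refine ssubset_of_subset_not_subset ?_ ?_
  · rintro x ⟨y, rfl⟩
    exact ⟨y * c, by simp only [h, mul_assoc]⟩
  · intro hsub
    obtain ⟨d, hd⟩ := hsub ⟨1, one_mul b⟩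
    have hd' : d * a = b := hd
    have h1 : (d * c) * b = 1 * b := by rw [mul_assoc, ← h, hd', one_mul]
    have h2 : d * c = 1 := mul_right_cancel h1
    have h3 : c * d = 1 := by
      have : (c * d) * c = 1 * c := by rw [mul_assoc, h2, mul_one, one_mul]
      exact mul_right_cancel this
    exact hc (unit_of_mul_eq_one' h3)

private lemma rightIdeal_ssubset' {M : Type*} [CancelMonoid M] {a b e : M}
    (h : a = b * e) (he : ¬IsUnit e) : rightIdeal a ⊂ rightIdeal b := by
  refine ssubset_of_subset_not_subset ?_ ?_
  · rintro x ⟨y, rfl⟩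
    exact ⟨e * y, by simp only [h, mul_assoc]⟩
  · intro hsub
    obtain ⟨d, hd⟩ := hsub ⟨1, mul_one b⟩
    have hd' : a * d = b := hd
    have h1 : b * (e * d) = b * 1 := by rw [← mul_assoc, ← h, hd', mul_one]
    have h2 : e * d = 1 := mul_left_cancel h1
    exact he (unit_of_mul_eq_one' h2)

theorem stmt0 {M : Type*} [CancelMonoid M]
    (haccL : ∀ f : ℕ → M, (∀ n : ℕ, leftIdeal (f n) ⊆ leftIdeal (f (n + 1))) →
      ∃ N : ℕ, ∀ n : ℕ, N ≤ n → leftIdeal (f n) = leftIdeal (f N))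
    (haccR : ∀ f : ℕ → M, (∀ n : ℕ, rightIdeal (f n) ⊆ rightIdeal (f (n + 1))) →
      ∃ N : ℕ, ∀ n : ℕ, N ≤ n → rightIdeal (f n) = rightIdeal (f N)) :
    Atomic M := by
  classical
  by_contra hA
  -- Ω : the set of non-atomic nonunits
  set Ω : Set M :=
      {x | ¬IsUnit x ∧ ¬∃ l : List M, (∀ y ∈ l, Irreducible y) ∧ l.prod = x} with hΩdef
  have hΩne : Ω.Nonempty := by
    by_contra hne
    apply hA
    intro x hx
    by_contra hxl
    exact hne ⟨x, hx, hxl⟩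
  -- every element of Ω splits into two nonunits
  have hsplit : ∀ x ∈ Ω, ∃ b c : M, x = b * c ∧ ¬IsUnit b ∧ ¬IsUnit c := by
    intro x hx
    have hirr : ¬Irreducible x := by
      intro hi
      exact hx.2 ⟨[x], by simpa using hi, by simp⟩
    have : ¬∀ b c : M, x = b * c → IsUnit b ∨ IsUnit c := fun h => hirr ⟨hx.1, h⟩
    push_neg at this
    obtain ⟨b, c, h1, h2, h3⟩ := this
    exact ⟨b, c, h1, h2, h3⟩
  -- there is an element of Ω whose left ideal is maximal among those of Ω
  have hmax : ∃ a ∈ Ω, ∀ x ∈ Ω, ¬(leftIdeal a ⊂ leftIdeal x) := by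
    by_contra hm
    push_neg at hm
    have hstep : ∀ p : {x // x ∈ Ω}, ∃ q : {x // x ∈ Ω},
        leftIdeal p.1 ⊂ leftIdeal q.1 := by
      rintro ⟨x, hx⟩
      obtain ⟨y, hy, hxy⟩ := hm x hx
      exact ⟨⟨y, hy⟩, hxy⟩
    choose g hg using hstep
    obtain ⟨x0, hx0⟩ := hΩne
    set f : ℕ → {x // x ∈ Ω} := fun n => g^[n] ⟨x0, hx0⟩ with hf
    have hfs : ∀ n, leftIdeal (f n).1 ⊂ leftIdeal (f (n + 1)).1 := by
      intro n
      have : f (n + 1) = g (f n) := Function.iterate_succ_apply' g n _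
      rw [this]
      exact hg (f n)
    obtain ⟨N, hN⟩ := haccL (fun n => (f n).1) (fun n => (hfs n).1)
    have := hN (N + 1) (Nat.le_succ N)
    exact (hfs N).2 (this ▸ subset_rfl)
  obtain ⟨a, haΩ, hamax⟩ := hmax
  -- key: in any splitting of `a` into nonunits, the left factor is in Ω
  have key : ∀ b c : M, a = b * c → ¬IsUnit b → ¬IsUnit c → b ∈ Ω := by
    intro b c hbc hb hc
    have hcΩ : c ∉ Ω := fun hcΩ => hamax c hcΩ (leftIdeal_ssubset' hbc hb)
    have hcl : ∃ l : List M, (∀ y ∈ l, Irreducible y) ∧ l.prod = c := by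
      by_contra h
      exact hcΩ ⟨hc, h⟩
    obtain ⟨lc, hlc, hlcp⟩ := hcl
    refine ⟨hb, fun hbl => ?_⟩
    obtain ⟨lb, hlb, hlbp⟩ := hbl
    refine haΩ.2 ⟨lb ++ lc, ?_, ?_⟩
    · intro y hy
      rcases List.mem_append.1 hy with h | h
      · exact hlb y h
      · exact hlc y h
    · rw [List.prod_append, hlbp, hlcp, hbc]
  -- S : left factors of a lying in Ω
  set S : Set M := {b | b ∈ Ω ∧ ∃ c : M, ¬IsUnit c ∧ a = b * c} with hSdef
  have hSne : S.Nonempty := by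
    obtain ⟨b, c, h1, h2, h3⟩ := hsplit a haΩ
    exact ⟨b, key b c h1 h2 h3, c, h3, h1⟩
  have hSstep : ∀ p : {x // x ∈ S}, ∃ q : {x // x ∈ S},
      rightIdeal p.1 ⊂ rightIdeal q.1 := by
    rintro ⟨b, hbΩ, c, hc, hac⟩
    obtain ⟨d, e, hde, hd, he⟩ := hsplit b hbΩ
    have hec : ¬IsUnit (e * c) := by
      rintro ⟨u, hu⟩
      apply he
      refine unit_of_mul_eq_one' (x := c * (↑u⁻¹ : Mˣ)) ?_
      rw [← mul_assoc, ← hu]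
      simp
    have had : a = d * (e * c) := by rw [hac, hde, mul_assoc]
    have hdΩ : d ∈ Ω := key d (e * c) had hd hec
    exact ⟨⟨d, hdΩ, e * c, hec, had⟩, rightIdeal_ssubset' hde he⟩
  choose g hg using hSstep
  obtain ⟨x0, hx0⟩ := hSne
  set f : ℕ → {x // x ∈ S} := fun n => g^[n] ⟨x0, hx0⟩ with hf
  have hfs : ∀ n, rightIdeal (f n).1 ⊂ rightIdeal (f (n + 1)).1 := by
    intro n
    have : f (n + 1) = g (f n) := Function.iterate_succ_apply' g n _
    rw [this]
    exact hg (f n)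
  obtain ⟨N, hN⟩ := haccR (fun n => (f n).1) (fun n => (hfs n).1)
  have := hN (N + 1) (Nat.le_succ N)
  exact (hfs N).2 (this ▸ subset_rfl)
end

section
/- A cancellative monoid H is a BF-monoid (i.e., L(a) is finite and nonempty for all a ∈ H) if and only if there exists a right length function on H, that is, a function λ : H → ℕ with λ(a) < λ(b) for all a ∈ H and all b ∈ aH \ aH^×. -/
open scoped Classical ENNReal

/-!
If `L(a)` is always finite and nonempty, `a ↦ max L(a)` is a right length function: a longest
factorization of `a` followed by any factorization of a nonunit `c` is a longer factorization
of `a * c`. Conversely, a right length function `λ` bounds every factorization of `a` by `λ a`,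
and it makes `M` atomic: among all `a = v * w` with `w` a nonunit, one with `λ v` maximal has
`w` irreducible, and induction on `λ` factors `v`.
-/

section Lengths

variable {M : Type*} [Monoid M]

theorem mem_lengths_of_not_isUnit {a : M} (ha : ¬IsUnit a) {k : ℕ} :
    k ∈ lengths a ↔ ∃ l : List M, l.length = k ∧ (∀ x ∈ l, Irreducible x) ∧ l.prod = a := by
  simp [lengths, ha]

theorem pos_of_mem_lengths {c : M} (hc : ¬IsUnit c) {m : ℕ} (hm : m ∈ lengths c) : 0 < m := by
  obtain ⟨l, rfl, -, rfl⟩ := (mem_lengths_of_not_isUnit hc).1 hm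
  refine List.length_pos_iff.2 fun hl => hc ?_
  simp [hl]

theorem add_mem_lengths_mul [IsDedekindFiniteMonoid M] {a c : M} (hc : ¬IsUnit c) {k m : ℕ}
    (hk : k ∈ lengths a) (hm : m ∈ lengths c) : k + m ∈ lengths (a * c) := by
  have hac : ¬IsUnit (a * c) := fun h => hc (isUnit_of_mul_isUnit_right h)
  obtain ⟨lc, rfl, hlc, rfl⟩ := (mem_lengths_of_not_isUnit hc).1 hm
  rw [mem_lengths_of_not_isUnit hac]
  by_cases ha : IsUnit a
  · obtain rfl : k = 0 := by simpa [lengths, ha] using hk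
    obtain _ | ⟨x, t⟩ := lc
    · exact absurd isUnit_one hc
    · refine ⟨(a * x) :: t, by simp, ?_, by simp [mul_assoc]⟩
      simp only [List.mem_cons, forall_eq_or_imp] at hlc ⊢
      exact ⟨(irreducible_isUnit_mul ha).2 hlc.1, hlc.2⟩
  · obtain ⟨la, rfl, hla, rfl⟩ := (mem_lengths_of_not_isUnit ha).1 hk
    refine ⟨la ++ lc, by simp, ?_, by simp⟩
    simpa only [List.mem_append, or_imp, forall_and] using ⟨hla, hlc⟩

end Lengths

section RightLengthFunction

variable {M : Type*} [Monoid M]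

/-- In a left-cancellative monoid, `b ∈ aH \ aH^×` says exactly that `b = a * c` with `c` a
nonunit. -/
def IsRightLengthFunction (lam : M → ℕ) : Prop :=
  ∀ a c : M, ¬IsUnit c → lam a < lam (a * c)

theorem isRightLengthFunction_sSup_lengths [IsDedekindFiniteMonoid M]
    (hBF : ∀ a : M, (lengths a).Finite ∧ (lengths a).Nonempty) :
    IsRightLengthFunction fun a : M => sSup (lengths a) := by
  intro a c hc
  show sSup (lengths a) < sSup (lengths (a * c))
  have hmax : sSup (lengths a) ∈ lengths a := Nat.sSup_mem (hBF a).2 (hBF a).1.bddAbove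
  obtain ⟨m, hm⟩ := (hBF c).2
  have hlong := le_csSup (hBF (a * c)).1.bddAbove (add_mem_lengths_mul hc hmax hm)
  have := pos_of_mem_lengths hc hm
  omega

variable {lam : M → ℕ} (hlam : IsRightLengthFunction lam)
include hlam

theorem IsRightLengthFunction.length_le_prod {l : List M} (hl : ∀ x ∈ l, ¬IsUnit x) :
    l.length ≤ lam l.prod := by
  induction l using List.reverseRecOn with
  | nil => exact Nat.zero_le _
  | append_singleton t x ih =>
    have ht := ih fun y hy => hl y (by simp [hy])
    have hx := hlam t.prod x (hl x (by simp))
    simp only [List.prod_append, List.prod_singleton, List.length_append, List.length_singleton]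
    omega

theorem IsRightLengthFunction.lengths_subset_Iic (a : M) : lengths a ⊆ Set.Iic (lam a) := by
  by_cases ha : IsUnit a
  · simp [lengths, ha]
  · intro k hk
    obtain ⟨l, rfl, hl, rfl⟩ := (mem_lengths_of_not_isUnit ha).1 hk
    exact hlam.length_le_prod fun x hx => (hl x hx).not_isUnit

theorem IsRightLengthFunction.exists_irreducible_right_factor {a : M} (ha : ¬IsUnit a) :
    ∃ v w : M, Irreducible w ∧ a = v * w := by
  obtain ⟨v, ⟨w, hw, rfl⟩, hmax⟩ := (measure fun v => lam a - lam v).wf.has_min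
    {v | ∃ w, ¬IsUnit w ∧ a = v * w} ⟨1, a, ha, (one_mul a).symm⟩
  refine ⟨v, w, irreducible_iff.2 ⟨hw, fun x y hxy => ?_⟩, rfl⟩
  by_contra! hxy_nonunit
  have hvx := hlam v x hxy_nonunit.1
  have hvxy := hlam (v * x) y hxy_nonunit.2
  refine hmax (v * x) ⟨y, hxy_nonunit.2, by rw [hxy, mul_assoc]⟩ ?_
  rw [hxy, ← mul_assoc]
  exact Nat.sub_lt_sub_left (hvx.trans hvxy) hvx

theorem IsRightLengthFunction.atomic : Atomic M := by
  intro a ha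
  induction hn : lam a using Nat.strong_induction_on generalizing a with
  | _ n ih =>
    obtain ⟨v, w, hw, rfl⟩ := hlam.exists_irreducible_right_factor ha
    by_cases hv : IsUnit v
    · exact ⟨[v * w], by simpa using (irreducible_isUnit_mul hv).2 hw, by simp⟩
    · obtain ⟨l, hl, rfl⟩ := ih _ (hn ▸ hlam _ w hw.not_isUnit) v hv rfl
      refine ⟨l ++ [w], ?_, by simp⟩
      simpa only [List.mem_append, List.mem_singleton, or_imp, forall_and, forall_eq] using
        ⟨hl, hw⟩

theorem IsRightLengthFunction.lengths_nonempty (a : M) : (lengths a).Nonempty := by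
  by_cases ha : IsUnit a
  · simp [lengths, ha]
  · obtain ⟨l, hl, hprod⟩ := hlam.atomic a ha
    exact ⟨l.length, (mem_lengths_of_not_isUnit ha).2 ⟨l, rfl, hl, hprod⟩⟩

end RightLengthFunction

theorem stmt2 {M : Type*} [CancelMonoid M] :
    (∀ a : M, (lengths a).Finite ∧ (lengths a).Nonempty) ↔
      ∃ lam : M → ℕ, ∀ a b : M, b ∈ rightIdeal a →
        (∀ u : M, IsUnit u → b ≠ a * u) → lam a < lam b := by
  constructor
  · intro hBF
    refine ⟨fun a => sSup (lengths a), ?_⟩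
    rintro a _ ⟨c, rfl⟩ hc
    exact isRightLengthFunction_sSup_lengths hBF a c fun hcu => hc c hcu rfl
  · rintro ⟨lam, hlam⟩
    have hright : IsRightLengthFunction lam := fun a c hc =>
      hlam a (a * c) ⟨c, rfl⟩ fun u hu hcu => hc (mul_left_cancel hcu ▸ hu)
    exact fun a => ⟨(Set.finite_Iic _).subset (hright.lengths_subset_Iic a),
      hright.lengths_nonempty a⟩
end

section
/- If a cancellative monoid H is a BF-monoid, then H satisfies the ascending chain condition on principal left ideals Ha and on principal right ideals aH. -/
open scoped Classical ENNReal

/-!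
Let `maxLength a = max L(a)`. If `c` is not a unit, then concatenating a factorization of `c`
with a longest factorization of `b` shows `maxLength b < maxLength (c * b)`. A strict inclusion
`Ha ⊊ Hb` forces `a = c * b` with `c` not a unit, so along a strictly ascending chain of principal
left ideals the maximal lengths of the generators strictly decrease; hence the chain stabilizes.
Right ideals of `H` are the left ideals of the opposite monoid, which has the same sets of lengths.
-/

open MulOpposite

noncomputable def maxLength {M : Type*} [Monoid M] (a : M) : ℕ := sSup (lengths a)

section Monoid

variable {M : Type*} [Monoid M]

lemma pos_of_mem_lengths_s3 {a : M} (ha : ¬IsUnit a) {k : ℕ} (hk : k ∈ lengths a) : 0 < k := by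
  rw [lengths, if_neg ha] at hk
  obtain ⟨l, rfl, -, rfl⟩ := hk
  refine List.length_pos_iff.mpr ?_
  rintro rfl
  exact ha isUnit_one

lemma add_mem_lengths_mul_s3 {a b : M} (ha : ¬IsUnit a) (hb : ¬IsUnit b) (hab : ¬IsUnit (a * b))
    {j k : ℕ} (hj : j ∈ lengths a) (hk : k ∈ lengths b) : j + k ∈ lengths (a * b) := by
  rw [lengths, if_neg ha] at hj
  rw [lengths, if_neg hb] at hk
  obtain ⟨la, rfl, hla, rfl⟩ := hj
  obtain ⟨lb, rfl, hlb, rfl⟩ := hk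
  rw [lengths, if_neg hab]
  exact ⟨la ++ lb, List.length_append, fun x hx => (List.mem_append.mp hx).elim (hla x) (hlb x),
    List.prod_append⟩

lemma exists_not_isUnit_mul_eq_of_leftIdeal_ssubset {a b : M} (h : leftIdeal a ⊂ leftIdeal b) :
    ∃ c, ¬IsUnit c ∧ c * b = a := by
  obtain ⟨c, hc⟩ := h.subset ⟨1, one_mul a⟩
  refine ⟨c, fun ⟨u, hu⟩ => h.not_subset ?_, hc⟩
  rintro _ ⟨y, rfl⟩
  exact ⟨y * ↑u⁻¹, by simp [← hc, ← hu, mul_assoc]⟩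

lemma irreducible_op {x : M} : Irreducible (op x) ↔ Irreducible x := by
  refine ⟨fun h => ⟨isUnit_op.not.mp h.not_isUnit, fun a b hab => ?_⟩,
    fun h => ⟨isUnit_op.not.mpr h.not_isUnit, fun a b hab => ?_⟩⟩
  · exact (h.isUnit_or_isUnit (a := op b) (b := op a) (by rw [hab, op_mul])).symm.imp
      isUnit_op.mp isUnit_op.mp
  · exact (h.isUnit_or_isUnit (a := unop b) (b := unop a) (by rw [← unop_mul, ← hab,
      unop_op])).symm.imp isUnit_unop.mp isUnit_unop.mp

lemma lengths_op (a : M) : lengths (op a) = lengths a := by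
  simp only [lengths, isUnit_op]
  split_ifs
  · rfl
  ext k
  constructor
  · rintro ⟨l, rfl, hl, hprod⟩
    refine ⟨(l.map unop).reverse, by simp, ?_, ?_⟩
    · intro x hx
      obtain ⟨y, hy, rfl⟩ := List.mem_map.mp (List.mem_reverse.mp hx)
      exact irreducible_op.mp (hl y hy)
    · rw [← unop_list_prod, hprod, unop_op]
  · rintro ⟨l, rfl, hl, rfl⟩
    exact ⟨(l.map op).reverse, by simp, by simpa [irreducible_op] using hl, (op_list_prod l).symm⟩

lemma leftIdeal_op (a : M) : leftIdeal (op a) = unop ⁻¹' rightIdeal a := by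
  ext x
  obtain ⟨x, rfl⟩ := op_surjective x
  simp only [leftIdeal, rightIdeal, Set.mem_range, Set.mem_preimage, op_surjective.exists,
    unop_op, ← op_mul, op_inj]

end Monoid

section CancelMonoid

variable {M : Type*} [CancelMonoid M]
  (hbf : ∀ a : M, (lengths a).Finite ∧ (lengths a).Nonempty)
include hbf

lemma maxLength_lt_maxLength_mul_left {b c : M} (hc : ¬IsUnit c) :
    maxLength b < maxLength (c * b) := by
  have hcb : ¬IsUnit (c * b) := fun h => hc (isUnit_of_mul_isUnit_left h)
  have le_maxLength : ∀ {a : M} {k : ℕ}, k ∈ lengths a → k ≤ maxLength a :=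
    fun hk => le_csSup (hbf _).1.bddAbove hk
  by_cases hb : IsUnit b
  · obtain ⟨k, hk⟩ := (hbf (c * b)).2
    rw [maxLength, lengths, if_pos hb, csSup_singleton]
    exact (pos_of_mem_lengths_s3 hcb hk).trans_le (le_maxLength hk)
  · obtain ⟨j, hj⟩ := (hbf c).2
    have hmax : maxLength b ∈ lengths b := Nat.sSup_mem (hbf b).2 (hbf b).1.bddAbove
    have := le_maxLength (add_mem_lengths_mul_s3 hc hb hcb hj hmax)
    have := pos_of_mem_lengths_s3 hc hj
    omega

lemma wellFoundedGT_range_leftIdeal : WellFoundedGT (Set.range (leftIdeal : M → Set M)) := by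
  refine ⟨Subrelation.wf ?_ (InvImage.wf
    (fun I : Set.range (leftIdeal : M → Set M) => maxLength I.2.choose) wellFounded_lt)⟩
  intro I J hJI
  obtain ⟨c, hc, hca⟩ := exists_not_isUnit_mul_eq_of_leftIdeal_ssubset
    (a := J.2.choose) (b := I.2.choose) (by rw [J.2.choose_spec, I.2.choose_spec]; exact hJI)
  show maxLength I.2.choose < maxLength J.2.choose
  rw [← hca]
  exact maxLength_lt_maxLength_mul_left hbf hc

theorem leftIdeal_chain_stabilizes (f : ℕ → M)
    (hf : ∀ n, leftIdeal (f n) ⊆ leftIdeal (f (n + 1))) :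
    ∃ N, ∀ n, N ≤ n → leftIdeal (f n) = leftIdeal (f N) := by
  have := wellFoundedGT_range_leftIdeal hbf
  obtain ⟨N, hN⟩ := WellFoundedGT.monotone_chain_condition
    (⟨fun n => ⟨leftIdeal (f n), f n, rfl⟩, monotone_nat_of_le_succ hf⟩ :
      ℕ →o Set.range (leftIdeal : M → Set M))
  exact ⟨N, fun n hn => congrArg Subtype.val (hN n hn).symm⟩

theorem rightIdeal_chain_stabilizes (f : ℕ → M)
    (hf : ∀ n, rightIdeal (f n) ⊆ rightIdeal (f (n + 1))) :
    ∃ N, ∀ n, N ≤ n → rightIdeal (f n) = rightIdeal (f N) := by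
  obtain ⟨N, hN⟩ := leftIdeal_chain_stabilizes (M := Mᵐᵒᵖ)
    (fun a => lengths_op a.unop ▸ hbf a.unop) (op ∘ f)
    (fun n => by simpa only [Function.comp, leftIdeal_op] using Set.preimage_mono (hf n))
  refine ⟨N, fun n hn => Set.preimage_injective.mpr unop_surjective ?_⟩
  simpa only [Function.comp, leftIdeal_op] using hN n hn

end CancelMonoid

theorem stmt3 {M : Type*} [CancelMonoid M]
    (hbf : ∀ a : M, (lengths a).Finite ∧ (lengths a).Nonempty) :
    (∀ f : ℕ → M, (∀ n : ℕ, leftIdeal (f n) ⊆ leftIdeal (f (n + 1))) →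
      ∃ N : ℕ, ∀ n : ℕ, N ≤ n → leftIdeal (f n) = leftIdeal (f N)) ∧
    (∀ f : ℕ → M, (∀ n : ℕ, rightIdeal (f n) ⊆ rightIdeal (f (n + 1))) →
      ∃ N : ℕ, ∀ n : ℕ, N ≤ n → rightIdeal (f n) = rightIdeal (f N)) :=
  ⟨leftIdeal_chain_stabilizes hbf, rightIdeal_chain_stabilizes hbf⟩
end

section
/- Let H be a reduced atomic cancellative monoid which is finitely presented by its set of atoms A(H) and a finite set of relations R, i.e., H is isomorphic to the quotient of the free monoid on A(H) by the congruence generated by the finite set R of pairs of words. Then the set of distances Δ(H) is finite; more precisely, Δ(H) ⊆ [1, M] where M = max { | |x| − |y| | : (x, y) ∈ R } and |·| is word length. -/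
/-!
Two factorizations of `a` are words with the same image in `M`, so by the presentation they are
linked by a chain of elementary rewrites `p x q ↦ p y q` with `(x, y)` or `(y, x)` in `R`. Every
word in the chain is again a factorization of `a`, and one rewrite changes the length by at most
the maximum `m` of `| |x| - |y| |` over `R`. A chain from a factorization of length `k` to one of
length `k + d`, where no length of `a` lies strictly between, must therefore jump over the gap in a
single rewrite, so `d ≤ m`.
-/

open scoped Classical ENNReal

open Relation

namespace Monoid

variable {N : Type*} [Monoid N]

def RewriteStep (r : N → N → Prop) (u v : N) : Prop :=
  ∃ p q a b, r a b ∧ u = p * a * q ∧ v = p * b * q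

variable {r : N → N → Prop}

theorem RewriteStep.of_rel {a b : N} (h : r a b) : RewriteStep r a b :=
  ⟨1, 1, a, b, h, by simp, by simp⟩

theorem RewriteStep.mul_mul {u v : N} (h : RewriteStep r u v) (p q : N) :
    RewriteStep r (p * u * q) (p * v * q) := by
  obtain ⟨p', q', a, b, hab, rfl, rfl⟩ := h
  exact ⟨p * p', q' * q, a, b, hab, by simp only [mul_assoc], by simp only [mul_assoc]⟩

theorem eqvGen_rewriteStep_mul_mul {u v : N} (h : EqvGen (RewriteStep r) u v) (p q : N) :
    EqvGen (RewriteStep r) (p * u * q) (p * v * q) := by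
  induction h with
  | rel _ _ h => exact .rel _ _ (h.mul_mul p q)
  | refl => exact .refl _
  | symm _ _ _ ih => exact .symm _ _ ih
  | trans _ _ _ _ _ ih₁ ih₂ => exact .trans _ _ _ ih₁ ih₂

def rewriteCon (r : N → N → Prop) : Con N where
  r := EqvGen (RewriteStep r)
  iseqv := EqvGen.is_equivalence _
  mul' {w x y z} hwx hyz := by
    have h₁ := eqvGen_rewriteStep_mul_mul hwx 1 y
    have h₂ := eqvGen_rewriteStep_mul_mul hyz x 1
    simp only [one_mul, mul_one] at h₁ h₂
    exact .trans _ _ _ h₁ h₂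

theorem conGen_iff_eqvGen_rewriteStep {x y : N} :
    conGen r x y ↔ EqvGen (RewriteStep r) x y := by
  constructor
  · exact fun h => (Con.conGen_le (c := rewriteCon r)).mpr
      (fun a b hab => EqvGen.rel _ _ (RewriteStep.of_rel hab)) h
  · intro h
    induction h with
    | rel _ _ h =>
      obtain ⟨p, q, a, b, hab, rfl, rfl⟩ := h
      exact (conGen r).mul ((conGen r).mul ((conGen r).refl p) (.of _ _ hab)) ((conGen r).refl q)
    | refl => exact (conGen r).refl _
    | symm _ _ _ ih => exact (conGen r).symm ih
    | trans _ _ _ _ _ ih₁ ih₂ => exact (conGen r).trans ih₁ ih₂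

end Monoid

namespace FreeMonoid

theorem length_le_of_symmGen_rewriteStep {α : Type*} {r : FreeMonoid α → FreeMonoid α → Prop}
    {m : ℕ} (hr : ∀ a b, r a b → b.length ≤ a.length + m ∧ a.length ≤ b.length + m)
    {u v : FreeMonoid α} (h : SymmGen (Monoid.RewriteStep r) u v) :
    v.length ≤ u.length + m := by
  rcases h with ⟨p, q, a, b, hab, rfl, rfl⟩ | ⟨p, q, a, b, hab, rfl, rfl⟩ <;>
  · have := hr a b hab
    simp only [length_mul]
    omega

end FreeMonoid

theorem Relation.ReflTransGen.exists_step_crossing {α β : Type*} [LinearOrder β]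
    {S : α → α → Prop} {f : α → β} {x y : α} {t : β} (h : ReflTransGen S x y)
    (hx : f x < t) (hy : t ≤ f y) :
    ∃ u v, ReflTransGen S x u ∧ S u v ∧ f u < t ∧ t ≤ f v := by
  induction h with
  | refl => exact absurd hy (not_le.mpr hx)
  | @tail b c hxb hbc ih =>
    by_cases hb : t ≤ f b
    · exact ih hb
    · exact ⟨b, c, hxb, hbc, not_le.mp hb, hy⟩

theorem distances_singleton (n : ℕ) : distances {n} = ∅ :=
  Set.eq_empty_of_forall_notMem fun _ ⟨hd, _, hk, hkd, _⟩ => by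
    rw [Set.mem_singleton_iff] at hk hkd
    omega

theorem not_isUnit_of_mem_distances_lengths {M : Type*} [Monoid M] {a : M} {d : ℕ}
    (hd : d ∈ distances (lengths a)) : ¬IsUnit a := by
  intro ha
  rw [lengths, if_pos ha, distances_singleton] at hd
  exact hd

theorem mem_lengths_iff {M : Type*} [Monoid M] {a : M} (ha : ¬IsUnit a) {k : ℕ} :
    k ∈ lengths a ↔ ∃ w : FreeMonoid {x : M // Irreducible x},
      FreeMonoid.lift Subtype.val w = a ∧ w.length = k := by
  rw [lengths, if_neg ha]
  constructor
  · rintro ⟨l, rfl, hl, rfl⟩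
    lift l to List {x : M // Irreducible x} using hl
    exact ⟨FreeMonoid.ofList l, by simp [FreeMonoid.lift_ofList], by simp [FreeMonoid.length]⟩
  · rintro ⟨w, rfl, rfl⟩
    exact ⟨w.toList.map Subtype.val, by simp [FreeMonoid.length],
      List.forall_mem_map.2 fun x _ => x.2, by simp [FreeMonoid.lift_apply]⟩

theorem stmt10_general {M : Type*} [CancelMonoid M]
    (R : Finset (FreeMonoid {a : M // Irreducible a} × FreeMonoid {a : M // Irreducible a}))
    (hker : Con.ker (FreeMonoid.lift (fun a : {a : M // Irreducible a} => (a : M))) =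
      conGen fun x y => (x, y) ∈ R) :
    DeltaH M ⊆ Set.Icc 1
      (R.sup fun p => (p.1.length - p.2.length) ⊔ (p.2.length - p.1.length)) := by
  set m := R.sup fun p => (p.1.length - p.2.length) ⊔ (p.2.length - p.1.length)
  have hR : ∀ x y, (x, y) ∈ R → y.length ≤ x.length + m ∧ x.length ≤ y.length + m := by
    intro x y hxy
    have hsup : (x.length - y.length) ⊔ (y.length - x.length) ≤ m :=
      Finset.le_sup (f := fun p => (p.1.length - p.2.length) ⊔ (p.2.length - p.1.length)) hxy
    simp only [sup_le_iff] at hsup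
    omega
  have hclass : ∀ {x y}, FreeMonoid.lift Subtype.val x = FreeMonoid.lift Subtype.val y ↔
      ReflTransGen (SymmGen (Monoid.RewriteStep fun x y => (x, y) ∈ R)) x y := by
    intro x y
    rw [EqvGen.reflTransGen_symmGen, ← Monoid.conGen_iff_eqvGen_rewriteStep, ← hker]
    rfl
  rintro d ⟨_, ⟨a, rfl⟩, hd⟩
  have ha := not_isUnit_of_mem_distances_lengths hd
  obtain ⟨hd0, k, hk, hkd, hgap⟩ := hd
  obtain ⟨x, hx, rfl⟩ := (mem_lengths_iff ha).1 hk
  obtain ⟨y, hy, hyk⟩ := (mem_lengths_iff ha).1 hkd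
  obtain ⟨u, v, hxu, huv, hu, hv⟩ :=
    (hclass.1 (hx.trans hy.symm)).exists_step_crossing (f := FreeMonoid.length) (by omega) hyk.ge
  have hu_gap := hgap _ ((mem_lengths_iff ha).2 ⟨u, (hclass.2 hxu).symm.trans hx, rfl⟩)
  have hv_le := FreeMonoid.length_le_of_symmGen_rewriteStep hR huv
  exact ⟨hd0, by omega⟩

theorem stmt10 {M : Type*} [CancelMonoid M]
    (hred : ∀ u : M, IsUnit u → u = 1) (hA : Atomic M)
    (R : Finset (FreeMonoid {a : M // Irreducible a} × FreeMonoid {a : M // Irreducible a}))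
    (hsurj : Function.Surjective
      (FreeMonoid.lift (fun a : {a : M // Irreducible a} => (a : M))))
    (hker : Con.ker (FreeMonoid.lift (fun a : {a : M // Irreducible a} => (a : M))) =
      conGen fun x y => (x, y) ∈ R) :
    DeltaH M ⊆ Set.Icc 1
      (R.sup fun p => (p.1.length - p.2.length) ⊔ (p.2.length - p.1.length)) :=
  stmt10_general R hker
end

section
/- Let G be an abelian group and G₀ ⊆ G a finite subset. Then the monoid B(G₀) of zero-sum sequences over G₀ is finitely generated. -/
open scoped Classical ENNReal

/-- An atom of a reduced additive monoid: a nonzero element which is not the sum of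
two nonzero elements. -/
def IsAddAtom {N : Type*} [AddMonoid N] (u : N) : Prop :=
  u ≠ 0 ∧ ∀ v w : N, u = v + w → v = 0 ∨ w = 0

/-- The set of lengths of `a` in a reduced additive monoid. -/
def addLengths {N : Type*} [AddMonoid N] (a : N) : Set ℕ :=
  {k | ∃ l : List N, l.length = k ∧ (∀ x ∈ l, IsAddAtom x) ∧ l.sum = a}

/-- An atom of the (reduced) submonoid `S`: a nonzero element of `S` which is not the
sum of two nonzero elements of `S`. -/
def IsAtomIn {N : Type*} [AddCommMonoid N] (S : Set N) (u : N) : Prop :=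
  u ∈ S ∧ u ≠ 0 ∧ ∀ v ∈ S, ∀ w ∈ S, u = v + w → v = 0 ∨ w = 0

/-- The set of lengths of `a` relative to the submonoid `S`. -/
def lengthsIn {N : Type*} [AddCommMonoid N] (S : Set N) (a : N) : Set ℕ :=
  {k | ∃ l : List N, l.length = k ∧ (∀ x ∈ l, IsAtomIn S x) ∧ l.sum = a}

/-- The set of distances of the submonoid `S`. -/
def DeltaIn {N : Type*} [AddCommMonoid N] (S : Set N) : Set ℕ :=
  ⋃ a ∈ S, distances (lengthsIn S a)

/-- The monoid of zero-sum sequences over `G`, realized as the set of multisets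
over `G` with sum zero. -/
def ZS (G : Type*) [AddCommGroup G] : Set (Multiset G) := {s | s.sum = 0}

/-- The Davenport constant: the maximal length of an atom of `B(G)`. -/
noncomputable def davenport (G : Type*) [AddCommGroup G] : ℕ :=
  sSup {n : ℕ | ∃ s : Multiset G, IsAtomIn (ZS G) s ∧ Multiset.card s = n}

/-- The union `U_k` of sets of lengths relative to `S`. -/
def UIn {N : Type*} [AddCommMonoid N] (S : Set N) (k : ℕ) : Set ℕ :=
  {ℓ | ∃ l1 l2 : List N, l1.length = k ∧ l2.length = ℓ ∧
      (∀ x ∈ l1, IsAtomIn S x) ∧ (∀ x ∈ l2, IsAtomIn S x) ∧ l1.sum = l2.sum}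

/-- `ρ_k = sup U_k`, valued in `ℝ≥0∞`. -/
noncomputable def rhoKIn {N : Type*} [AddCommMonoid N] (S : Set N) (k : ℕ) : ℝ≥0∞ :=
  ⨆ ℓ ∈ UIn S k, (ℓ : ℝ≥0∞)

/-- The elasticity of the submonoid `S`. -/
noncomputable def elasticityIn {N : Type*} [AddCommMonoid N] (S : Set N) : ℝ≥0∞ :=
  ⨆ a ∈ S, setElasticity (lengthsIn S a)

/-!
Over a finite alphabet `G₀`, multisets are vectors in `ℕ^G₀`, so by Dickson's lemma they are
well-quasi-ordered, and every subtractive submonoid of them is finitely generated (its minimal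
nonzero elements form a finite antichain). The zero-sum multisets over `G₀`, viewed as multisets
over the subtype `G₀`, form the kernel of the sum map, which is subtractive; `B(G₀)` is its image
in `Multiset G`.
-/

instance Multiset.wellQuasiOrderedLE {α : Type*} [Finite α] : WellQuasiOrderedLE (Multiset α) :=
  (Finsupp.orderIsoMultiset (ι := α)).wellQuasiOrderedLE_iff.mp inferInstance

theorem AddMonoidHom.mem_mker_of_add_mem_mker {M N : Type*} [AddZeroClass M] [AddZeroClass N]
    (f : M →+ N) {x y : M} (hx : x ∈ AddMonoidHom.mker f) (hxy : x + y ∈ AddMonoidHom.mker f) :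
    y ∈ AddMonoidHom.mker f := by
  rw [AddMonoidHom.mem_mker] at *
  rwa [map_add, hx, zero_add] at hxy

theorem AddSubmonoid.FG.exists_finset_forall_exists_list_sum {M : Type*} [AddMonoid M]
    {P : AddSubmonoid M} (hP : P.FG) :
    ∃ S : Finset M, (S : Set M) ⊆ P ∧
      ∀ t ∈ P, ∃ l : List M, (∀ x ∈ l, x ∈ S) ∧ l.sum = t := by
  obtain ⟨S, rfl⟩ := hP
  exact ⟨S, AddSubmonoid.subset_closure, fun t ht => AddSubmonoid.exists_list_of_mem_closure ht⟩

section ZeroSum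

variable {G : Type*} [AddCommMonoid G]

def zeroSumSubmonoid (G₀ : Set G) : AddSubmonoid (Multiset G) where
  carrier := {t | (∀ g ∈ t, g ∈ G₀) ∧ t.sum = 0}
  zero_mem' := by simp
  add_mem' := by
    rintro s t ⟨hsG, hs0⟩ ⟨htG, ht0⟩
    refine ⟨fun g hg => ?_, by rw [Multiset.sum_add, hs0, ht0, zero_add]⟩
    rcases Multiset.mem_add.mp hg with hg | hg
    exacts [hsG g hg, htG g hg]

def subtypeSumHom (G₀ : Set G) : Multiset G₀ →+ G :=
  Multiset.sumAddMonoidHom.comp (Multiset.mapAddMonoidHom Subtype.val)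

theorem zeroSumSubmonoid_eq_map_mker (G₀ : Set G) :
    zeroSumSubmonoid G₀ =
      (AddMonoidHom.mker (subtypeSumHom G₀)).map (Multiset.mapAddMonoidHom Subtype.val) := by
  ext t
  constructor
  · rintro ⟨htG, ht0⟩
    lift t to Multiset G₀ using htG
    exact ⟨t, ht0, rfl⟩
  · rintro ⟨t, ht0, rfl⟩
    exact ⟨fun g hg => by obtain ⟨g, -, rfl⟩ := Multiset.mem_map.mp hg; exact g.2, ht0⟩

theorem zeroSumSubmonoid_fg {G₀ : Set G} (hG₀ : G₀.Finite) : (zeroSumSubmonoid G₀).FG := by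
  have : Finite G₀ := hG₀
  rw [zeroSumSubmonoid_eq_map_mker]
  exact (AddSubmonoid.fg_of_subtractive fun x hx y hxy =>
    (subtypeSumHom G₀).mem_mker_of_add_mem_mker hx hxy).map _

end ZeroSum

theorem stmt13 {G : Type*} [AddCommGroup G] (G₀ : Set G) (hfin : G₀.Finite) :
    ∃ S : Finset (Multiset G),
      (∀ s ∈ S, (∀ g ∈ s, g ∈ G₀) ∧ s.sum = 0) ∧
      ∀ t : Multiset G, (∀ g ∈ t, g ∈ G₀) → t.sum = 0 →
        ∃ l : List (Multiset G), (∀ x ∈ l, x ∈ S) ∧ l.sum = t := by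
  obtain ⟨S, hSB, hgen⟩ := (zeroSumSubmonoid_fg hfin).exists_finset_forall_exists_list_sum
  exact ⟨S, fun s hs => hSB hs, fun t htG ht0 => hgen t ⟨htG, ht0⟩⟩
end

section
/- Let G be an abelian group. The following are equivalent: (a) |G| ≤ 2; (b) the monoid B(G) of zero-sum sequences over G is factorial (i.e., free abelian); (c) B(G) is half-factorial. -/
open scoped Classical ENNReal

universe u

/-- The monoid of zero-sum sequences over `G`, as an additive submonoid of the free
abelian monoid of multisets over `G`. -/
def zeroSum (G : Type u) [AddCommGroup G] : AddSubmonoid (Multiset G) where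
  carrier := {s | s.sum = 0}
  zero_mem' := by simp
  add_mem' := by
    intro a b ha hb
    simp only [Set.mem_setOf_eq] at ha hb ⊢
    rw [Multiset.sum_add, ha, hb, add_zero]

/-!
If `G` has at most two elements, it is `{0}` or `{0, g}` with `2 g = 0`, and `B(G)` is free on
the atoms `0` and `g g`. Free monoids are half-factorial, since all their atoms have length one.
If `G` has three distinct elements, there are `g, h` with `g, h, g + h` all nonzero. Then
`S = g h (-(g + h))` and `-S` are atoms, while `S (-S)` is also the product of the three atoms
`x (-x)` for `x = g, h, g + h`; so `B(G)` is not half-factorial.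
-/

def IsFreeCommAddMonoid (M : Type u) [AddMonoid M] : Prop :=
  ∃ β : Type u, Nonempty (M ≃+ (β →₀ ℕ))

def IsHalfFactorial (M : Type*) [AddMonoid M] : Prop :=
  ∀ a : M, ∃! k : ℕ, k ∈ addLengths a

section Transport

variable {M N : Type*} [AddMonoid M] [AddMonoid N]

lemma IsAddAtom.map (e : M ≃+ N) {u : M} (hu : IsAddAtom u) : IsAddAtom (e u) := by
  refine ⟨by simpa using hu.1, fun v w hvw => ?_⟩
  have : u = e.symm v + e.symm w := by simpa using congrArg e.symm hvw
  simpa using hu.2 _ _ this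

lemma addLengths_map (e : M ≃+ N) (u : M) : addLengths (e u) = addLengths u := by
  ext k
  constructor
  · rintro ⟨l, rfl, hl, hsum⟩
    refine ⟨l.map e.symm, by simp, ?_, by rw [← map_list_sum, hsum, e.symm_apply_apply]⟩
    simp only [List.mem_map, forall_exists_index, and_imp, forall_apply_eq_imp_iff₂]
    exact fun x hx => (hl x hx).map e.symm
  · rintro ⟨l, rfl, hl, rfl⟩
    refine ⟨l.map e, by simp, ?_, (map_list_sum e l).symm⟩
    simp only [List.mem_map, forall_exists_index, and_imp, forall_apply_eq_imp_iff₂]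
    exact fun x hx => (hl x hx).map e

lemma IsHalfFactorial.of_addEquiv (e : M ≃+ N) (hN : IsHalfFactorial N) : IsHalfFactorial M :=
  fun a => by simpa only [addLengths_map] using hN (e a)

lemma not_isHalfFactorial_of_sum_eq {l₁ l₂ : List M} (h₁ : ∀ x ∈ l₁, IsAddAtom x)
    (h₂ : ∀ x ∈ l₂, IsAddAtom x) (hsum : l₁.sum = l₂.sum) (hlen : l₁.length ≠ l₂.length) :
    ¬ IsHalfFactorial M := fun hM =>
  hlen ((hM l₁.sum).unique ⟨l₁, rfl, h₁, rfl⟩ ⟨l₂, rfl, h₂, hsum.symm⟩)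

end Transport

section FreeMonoid

variable {α : Type*}

lemma Multiset.isAddAtom_iff_card_eq_one {s : Multiset α} : IsAddAtom s ↔ card s = 1 := by
  constructor
  · rintro ⟨hs, hdec⟩
    obtain ⟨a, ha⟩ := exists_mem_of_ne_zero hs
    rcases hdec {a} (s.erase a) (by rw [singleton_add, cons_erase ha]) with h | h
    · simp at h
    · rw [← cons_erase ha, h]; rfl
  · intro hs
    refine ⟨fun h => by simp [h] at hs, fun v w hvw => ?_⟩
    have : card v + card w = 1 := by rw [← card_add, ← hvw, hs]
    by_contra! h
    have := card_pos.2 h.1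
    have := card_pos.2 h.2
    omega

lemma Multiset.addLengths_eq (s : Multiset α) : addLengths s = {card s} := by
  ext k
  simp only [Set.mem_singleton_iff]
  constructor
  · rintro ⟨l, rfl, hl, rfl⟩
    have hcard : card l.sum = (l.map card).sum := map_list_sum cardHom l
    have hone : ∀ x ∈ l.map card, x = 1 := by
      simpa using fun x hx => isAddAtom_iff_card_eq_one.1 (hl x hx)
    rw [hcard, List.eq_replicate_of_mem hone]
    simp
  · rintro rfl
    refine ⟨s.toList.map ({·}), by simp, ?_, ?_⟩
    · simp [isAddAtom_iff_card_eq_one]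
    · rw [← Multiset.sum_coe, ← Multiset.map_coe, coe_toList, sum_map_singleton]

lemma Multiset.isHalfFactorial : IsHalfFactorial (Multiset α) :=
  fun s => by simp [addLengths_eq]

lemma IsFreeCommAddMonoid.isHalfFactorial {M : Type u} [AddMonoid M]
    (hM : IsFreeCommAddMonoid M) : IsHalfFactorial M := by
  obtain ⟨β, ⟨e⟩⟩ := hM
  classical
  exact Multiset.isHalfFactorial.of_addEquiv (e.trans Multiset.toFinsupp.symm)

end FreeMonoid

namespace zeroSum

variable {G : Type u} [AddCommGroup G]

@[simp]
lemma mem_iff {s : Multiset G} : s ∈ zeroSum G ↔ s.sum = 0 := Iff.rfl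

lemma isAddAtom_mk {s : Multiset G} (hsum : s.sum = 0) (hs : s ≠ 0) (h0 : (0 : G) ∉ s)
    (hcard : Multiset.card s ≤ 3) : IsAddAtom (⟨s, hsum⟩ : zeroSum G) := by
  refine ⟨fun h => hs (congrArg Subtype.val h), fun v w hvw => ?_⟩
  have two_le : ∀ t : zeroSum G, (t : Multiset G) ≤ s → t ≠ 0 →
      2 ≤ Multiset.card (t : Multiset G) := by
    intro t hts ht
    by_contra! hlt
    obtain hc | hc : Multiset.card (t : Multiset G) = 0 ∨ Multiset.card (t : Multiset G) = 1 := by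
      omega
    · exact ht (Subtype.ext (Multiset.card_eq_zero.1 hc))
    · obtain ⟨a, ha⟩ := Multiset.card_eq_one.1 hc
      have ha0 : a = 0 := by simpa [ha] using t.2
      exact h0 (ha0 ▸ Multiset.mem_of_le hts (by simp [ha]))
  have hs_eq : s = v + w := congrArg Subtype.val hvw
  by_contra! hvw0
  have := two_le v (hs_eq ▸ Multiset.le_add_right _ _) hvw0.1
  have := two_le w (hs_eq ▸ Multiset.le_add_left _ _) hvw0.2
  have := congrArg Multiset.card hs_eq
  rw [Multiset.card_add] at this
  omega

lemma not_isHalfFactorial_of_add_ne_zero {g h : G} (hg : g ≠ 0) (hh : h ≠ 0) (hgh : g + h ≠ 0) :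
    ¬ IsHalfFactorial (zeroSum G) := by
  have pair_atom : ∀ x : G, x ≠ 0 → IsAddAtom (⟨{x, -x}, by simp⟩ : zeroSum G) := fun x hx =>
    isAddAtom_mk _ (by simp) (by simp [hx, eq_comm]) (by simp)
  refine not_isHalfFactorial_of_sum_eq
    (l₁ := [⟨{g, h, -(g + h)}, by simp⟩, ⟨{-g, -h, g + h}, by simp⟩])
    (l₂ := [⟨{g, -g}, by simp⟩, ⟨{h, -h}, by simp⟩, ⟨{g + h, -(g + h)}, by simp⟩])
    ?_ ?_ ?_ (by simp)
  · simp only [List.mem_cons, List.not_mem_nil, or_false, forall_eq_or_imp, forall_eq]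
    refine ⟨isAddAtom_mk _ (by simp) ?_ (by simp), isAddAtom_mk _ (by simp) ?_ (by simp)⟩ <;>
      simp [-neg_add_rev, hg, hh, hgh, eq_comm]
  · simp only [List.mem_cons, List.not_mem_nil, or_false, forall_eq_or_imp, forall_eq]
    exact ⟨pair_atom g hg, pair_atom h hh, pair_atom _ hgh⟩
  · apply Subtype.ext
    simp only [List.sum_cons, List.sum_nil, add_zero, AddSubmonoid.coe_add,
      Multiset.insert_eq_cons, ← Multiset.singleton_add]
    abel

lemma exists_add_ne_zero {a b c : G} (hab : a ≠ b) (hac : a ≠ c) (hbc : b ≠ c) :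
    ∃ g h : G, g ≠ 0 ∧ h ≠ 0 ∧ g + h ≠ 0 := by
  obtain ⟨g, h, hg, hh, hgh⟩ : ∃ g h : G, g ≠ 0 ∧ h ≠ 0 ∧ g ≠ h := by
    rcases eq_or_ne a 0 with rfl | ha
    · exact ⟨b, c, hab.symm, hac.symm, hbc⟩
    rcases eq_or_ne b 0 with rfl | hb
    · exact ⟨a, c, ha, hbc.symm, hac⟩
    exact ⟨a, b, ha, hb, hab⟩
  by_cases hgg : g + g = 0
  · refine ⟨g, h, hg, hh, fun hgh' => hgh ?_⟩
    rw [← neg_eq_of_add_eq_zero_right hgg, neg_eq_of_add_eq_zero_right hgh']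
  · exact ⟨g, g, hg, hg, hgg⟩

lemma forall_eq_or_eq_of_isHalfFactorial (hG : IsHalfFactorial (zeroSum G)) (a b c : G) :
    a = b ∨ a = c ∨ b = c := by
  by_contra! habc
  obtain ⟨g, h, hg, hh, hgh⟩ := exists_add_ne_zero habc.1 habc.2.1 habc.2.2
  exact not_isHalfFactorial_of_add_ne_zero hg hh hgh hG

lemma isFreeCommAddMonoid_of_subsingleton [Subsingleton G] :
    IsFreeCommAddMonoid (zeroSum G) := by
  have htop : zeroSum G = ⊤ := eq_top_iff.2 fun s _ => Subsingleton.elim _ _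
  exact ⟨G, ⟨(AddEquiv.addSubmonoidCongr htop).trans
    (AddSubmonoid.topEquiv.trans Multiset.toFinsupp)⟩⟩

section TwoElements

variable {g : G}

lemma eq_replicate_add_replicate (hg : g ≠ 0) (hG : ∀ x : G, x = 0 ∨ x = g) (s : Multiset G) :
    s = Multiset.replicate (s.count 0) 0 + Multiset.replicate (s.count g) g := by
  ext x
  rcases hG x with rfl | rfl <;> simp [Multiset.count_replicate, hg, hg.symm]

lemma add_self_eq_zero_of_forall (hg : g ≠ 0) (hG : ∀ x : G, x = 0 ∨ x = g) : g + g = 0 :=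
  (hG (g + g)).resolve_right fun h => hg (by simpa using h)

lemma even_count_of_mem (hg : g ≠ 0) (hG : ∀ x : G, x = 0 ∨ x = g) {s : Multiset G}
    (hs : s ∈ zeroSum G) : Even (s.count g) := by
  have hg2 : 2 • g = 0 := by rw [two_nsmul, add_self_eq_zero_of_forall hg hG]
  rw [mem_iff, eq_replicate_add_replicate hg hG s] at hs
  simpa [Multiset.count_replicate, hg, even_iff_two_dvd, ← addOrderOf_eq_prime hg2 hg,
    addOrderOf_dvd_iff_nsmul_eq_zero] using hs

noncomputable def replicateHom (hg2 : g + g = 0) : (G →₀ ℕ) →+ zeroSum G where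
  toFun f := ⟨Multiset.replicate (f 0) 0 + Multiset.replicate (2 * f g) g, by
    simp [two_mul, add_nsmul, ← nsmul_add, hg2]⟩
  map_zero' := by ext; simp
  map_add' f f' := Subtype.ext <| by
    simp only [Finsupp.coe_add, Pi.add_apply, mul_add, Multiset.replicate_add,
      AddSubmonoid.coe_add]
    exact add_add_add_comm ..

lemma replicateHom_bijective (hg : g ≠ 0) (hG : ∀ x : G, x = 0 ∨ x = g) (hg2 : g + g = 0) :
    Function.Bijective (replicateHom hg2) := by
  have count_zero (f : G →₀ ℕ) :
      ((replicateHom hg2 f : zeroSum G) : Multiset G).count 0 = f 0 := by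
    simp [replicateHom, Multiset.count_replicate, hg]
  have count_g (f : G →₀ ℕ) :
      ((replicateHom hg2 f : zeroSum G) : Multiset G).count g = 2 * f g := by
    simp [replicateHom, Multiset.count_replicate, hg.symm]
  refine ⟨fun f f' hff' => ?_, fun t => ?_⟩
  · ext x
    rcases hG x with rfl | hx
    · simpa [count_zero] using congrArg (fun t : zeroSum G => (t : Multiset G).count 0) hff'
    · rw [hx]
      simpa [count_g] using congrArg (fun t : zeroSum G => (t : Multiset G).count g) hff'
  · obtain ⟨k, hk⟩ := even_count_of_mem hg hG t.2
    refine ⟨Finsupp.single 0 ((t : Multiset G).count 0) + Finsupp.single g k, Subtype.ext ?_⟩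
    conv_rhs => rw [eq_replicate_add_replicate hg hG t, hk, ← two_mul]
    simp [replicateHom, hg, hg.symm]

end TwoElements

lemma isFreeCommAddMonoid_of_forall_eq_or_eq (hG : ∀ a b c : G, a = b ∨ a = c ∨ b = c) :
    IsFreeCommAddMonoid (zeroSum G) := by
  rcases subsingleton_or_nontrivial G with _ | _
  · exact isFreeCommAddMonoid_of_subsingleton
  obtain ⟨g, hg⟩ := exists_ne (0 : G)
  have hG' : ∀ x : G, x = 0 ∨ x = g := fun x => (hG x 0 g).imp_right (·.resolve_right hg.symm)
  have hg2 := add_self_eq_zero_of_forall hg hG'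
  exact ⟨G, ⟨(AddEquiv.ofBijective _ (replicateHom_bijective hg hG' hg2)).symm⟩⟩

end zeroSum

theorem stmt14 {G : Type u} [AddCommGroup G] :
    ((∀ a b c : G, a = b ∨ a = c ∨ b = c) ↔
      ∃ β : Type u, Nonempty (↥(zeroSum G) ≃+ (β →₀ ℕ))) ∧
    ((∃ β : Type u, Nonempty (↥(zeroSum G) ≃+ (β →₀ ℕ))) ↔
      ∀ s : ↥(zeroSum G), ∃! k : ℕ, k ∈ addLengths s) := by
  have h_ab := zeroSum.isFreeCommAddMonoid_of_forall_eq_or_eq (G := G)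
  have h_bc : IsFreeCommAddMonoid (zeroSum G) → IsHalfFactorial (zeroSum G) :=
    IsFreeCommAddMonoid.isHalfFactorial
  have h_ca := zeroSum.forall_eq_or_eq_of_isHalfFactorial (G := G)
  exact ⟨⟨h_ab, h_ca ∘ h_bc⟩, h_bc, h_ab ∘ h_ca⟩
end
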